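/- Let k ≥ 1 and let n be a natural number with n ≤ 2k. If S ⊆ ℤ^k is such that every x ∈ S has at most n neighbors in S (points of S at Euclidean distance 1 from x), then the upper density of S is at most 2k/(4k − n). Moreover, for k ≥ 2, if every x ∈ S has at most 1 neighbor in S then the upper density of S is at most 1/2, and this is attained: the checkerboard set {x ∈ ℤ^k : x₁ + ⋯ + x_k ≡ 0 (mod 2)} contains no two points at distance 1 and has density exactly 1/2. (Hence Δ_k(0) = Δ_k(1) = 1/2 for all k ≥ 2.) -/

import Mathlib

open Filter Topology

variable {k : ℕ}

/-- `y` is a neighbor of `x` in `ℤ^k`: they are at Euclidean distance 1. -/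
def IsNbrK {k : ℕ} (x y : Fin k → ℤ) : Prop :=
  ∑ i, (y i - x i) ^ 2 = 1

/-- The number of neighbors (points at distance 1) of `x` lying in `S ⊆ ℤ^k`. -/
noncomputable def nbrCountK {k : ℕ} (S : Set (Fin k → ℤ)) (x : Fin k → ℤ) : ℕ :=
  Set.ncard {y ∈ S | IsNbrK x y}

/-- The box `B_r = {x ∈ ℤ^k : |x_i| < r for all i}`. -/
def boxK (k : ℕ) (r : ℕ) : Set (Fin k → ℤ) :=
  {x | ∀ i, |x i| < (r : ℤ)}

/-- The upper density of `S ⊆ ℤ^k`: `limsup_{r → ∞} |S ∩ B_r| / (2r-1)^k`. -/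
noncomputable def upperDensityK {k : ℕ} (S : Set (Fin k → ℤ)) : ℝ :=
  limsup (fun r : ℕ => (Set.ncard (S ∩ boxK k r) : ℝ) / (2 * (r : ℝ) - 1) ^ k) atTop

/-- `S ⊆ ℤ^k` has density `d`. -/
def HasDensityK {k : ℕ} (S : Set (Fin k → ℤ)) (d : ℝ) : Prop :=
  Tendsto (fun r : ℕ => (Set.ncard (S ∩ boxK k r) : ℝ) / (2 * (r : ℝ) - 1) ^ k) atTop (𝓝 d)

/-- The checkerboard sublattice of `ℤ^k`: points with even coordinate sum. -/
def checkerK (k : ℕ) : Set (Fin k → ℤ) :=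
  {x | (2 : ℤ) ∣ ∑ i, x i}


/-!
Everything reduces to comparing `|S ∩ B_r|` with `|B_{r+1}|`, since `|B_{r+1}| / |B_r| → 1`.
If every point of `S` has at most `n` neighbours in `S`, count the edges between `S ∩ B_r` and
`B_{r+1} \ S`: at least `2k - n` leave each point of `S`, at most `2k` enter each point outside `S`,
so `(4k - n) |S ∩ B_r| ≤ 2k |B_{r+1}|`.
If every point has at most one neighbour in `S`, a unit square of a coordinate plane meets `S` in at
most two points (among three vertices of a 4-cycle one is adjacent to the other two), and every
point lies in four such squares, so `4 |S ∩ B_r| ≤ 2 |B_{r+1}|`.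
For the checkerboard `E`, translation by a unit vector swaps `E` and its complement, which traps
`|E ∩ B_{r+1}|` between `|B_r| / 2` and `|B_{r+2}| / 2`.
-/
open Finset

theorem sum_sq_eq_one_iff {ι : Type*} [Fintype ι] [DecidableEq ι] {v : ι → ℤ} :
    ∑ i, v i ^ 2 = 1 ↔ ∃ i, ∃ u : ℤˣ, v = Pi.single i (u : ℤ) := by
  constructor
  · intro h
    obtain ⟨i, hi⟩ : ∃ i, v i ≠ 0 := by
      by_contra! h0
      simp [h0] at h
    have hrest_nonneg : 0 ≤ ∑ j ∈ univ.erase i, v j ^ 2 := sum_nonneg fun j _ => sq_nonneg _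
    have hvi : 1 ≤ v i ^ 2 := by
      have := Int.one_le_abs hi
      nlinarith [sq_abs (v i)]
    have hsplit := add_sum_erase univ (fun j => v j ^ 2) (mem_univ i)
    have hvi1 : v i * v i = 1 := by nlinarith
    have hrest : ∀ j ∈ univ.erase i, v j ^ 2 = 0 :=
      (sum_eq_zero_iff_of_nonneg fun j _ => sq_nonneg _).1 (by linarith)
    refine ⟨i, ⟨v i, v i, hvi1, hvi1⟩, funext fun j => ?_⟩
    rcases eq_or_ne j i with rfl | hj
    · simp
    · simpa [hj] using hrest j (mem_erase.2 ⟨hj, mem_univ j⟩)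
  · rintro ⟨i, u, rfl⟩
    rw [sum_eq_single i (fun j _ hj => by simp [hj]) (by simp)]
    simp [← Units.val_pow_eq_pow_val, Int.units_sq]

theorem isNbrK_iff {x y : Fin k → ℤ} : IsNbrK x y ↔ ∃ i, ∃ u : ℤˣ, y = x + Pi.single i (u : ℤ) := by
  simp_rw [← sub_eq_iff_eq_add']
  exact sum_sq_eq_one_iff (v := y - x)

theorem IsNbrK.symm {x y : Fin k → ℤ} (h : IsNbrK x y) : IsNbrK y x := by
  simpa only [IsNbrK, ← neg_sub (y _), neg_sq] using h

theorem isNbrK_add_single (x : Fin k → ℤ) (i : Fin k) : IsNbrK x (x + Pi.single i 1) :=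
  isNbrK_iff.2 ⟨i, 1, rfl⟩

theorem IsNbrK.abs_sub_le_one {x y : Fin k → ℤ} (h : IsNbrK x y) (i : Fin k) :
    |y i - x i| ≤ 1 := by
  rw [← sq_le_one_iff_abs_le_one, ← h]
  exact single_le_sum (f := fun j => (y j - x j) ^ 2) (fun j _ => sq_nonneg _) (mem_univ i)

noncomputable def nbrFinset (x : Fin k → ℤ) : Finset (Fin k → ℤ) :=
  univ.image fun p : Fin k × ℤˣ => x + Pi.single p.1 (p.2 : ℤ)

theorem mem_nbrFinset {x y : Fin k → ℤ} : y ∈ nbrFinset x ↔ IsNbrK x y := by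
  simp [nbrFinset, isNbrK_iff, eq_comm]

theorem card_nbrFinset (x : Fin k → ℤ) : #(nbrFinset x) = 2 * k := by
  rw [nbrFinset, card_image_of_injective, card_univ, Fintype.card_prod, Fintype.card_fin,
    Fintype.card_units_int, mul_comm]
  rintro ⟨i, u⟩ ⟨j, w⟩ h
  have hsingle : Pi.single i (u : ℤ) = Pi.single j (w : ℤ) := add_left_cancel (a := x) h
  obtain rfl : i = j := by
    by_contra hij
    simpa [Pi.single_eq_of_ne hij] using congrFun hsingle i
  simpa [Units.val_inj] using hsingle

theorem nbrCountK_eq_card (S : Set (Fin k → ℤ)) (x : Fin k → ℤ) [DecidablePred (· ∈ S)] :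
    nbrCountK S x = #{y ∈ nbrFinset x | y ∈ S} := by
  rw [nbrCountK, ← Set.ncard_coe_finset]
  congr 1
  ext y
  simp [mem_nbrFinset, and_comm]

theorem eq_of_isNbrK_of_nbrCountK_le_one {S : Set (Fin k → ℤ)}
    (hS : ∀ x ∈ S, nbrCountK S x ≤ 1) {x y z : Fin k → ℤ} (hx : x ∈ S) (hy : y ∈ S)
    (hz : z ∈ S) (hxy : IsNbrK x y) (hxz : IsNbrK x z) : y = z := by
  classical
  have := hS x hx
  rw [nbrCountK_eq_card, card_le_one] at this
  exact this y (by simp [mem_nbrFinset, *]) z (by simp [mem_nbrFinset, *])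

noncomputable def boxFinset (k r : ℕ) : Finset (Fin k → ℤ) :=
  Fintype.piFinset fun _ => Ioo (-(r : ℤ)) r

theorem coe_boxFinset (k r : ℕ) : (boxFinset k r : Set (Fin k → ℤ)) = boxK k r := by
  ext x
  simp [boxFinset, boxK, abs_lt]

theorem mem_boxFinset {r : ℕ} {x : Fin k → ℤ} : x ∈ boxFinset k r ↔ x ∈ boxK k r := by
  rw [← coe_boxFinset, mem_coe]

theorem boxK_mono (k : ℕ) : Monotone (boxK k) :=
  fun _ _ hrs _ hx i => (hx i).trans_le (by exact_mod_cast hrs)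

theorem finite_boxK (k r : ℕ) : (boxK k r).Finite :=
  coe_boxFinset k r ▸ (boxFinset k r).finite_toSet

theorem ncard_boxK (k r : ℕ) : (boxK k r).ncard = (2 * r - 1) ^ k := by
  rw [← coe_boxFinset, Set.ncard_coe_finset, boxFinset, Fintype.card_piFinset, prod_const,
    card_univ, Fintype.card_fin, Int.card_Ioo]
  congr 1
  omega

theorem ncard_inter_boxK (S : Set (Fin k → ℤ)) [DecidablePred (· ∈ S)] (r : ℕ) :
    (S ∩ boxK k r).ncard = #{x ∈ boxFinset k r | x ∈ S} := by
  rw [← Set.ncard_coe_finset, coe_filter, ← coe_boxFinset, Set.inter_comm]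
  rfl

theorem add_mem_boxK {r m : ℕ} {x v : Fin k → ℤ} (hx : x ∈ boxK k r) (hv : ∀ i, |v i| ≤ m) :
    x + v ∈ boxK k (r + m) := fun i => by
  have := abs_add_le (x i) (v i)
  have := hx i
  have := hv i
  push_cast
  simp only [Pi.add_apply]
  linarith

theorem IsNbrK.mem_boxK_succ {r : ℕ} {x y : Fin k → ℤ} (h : IsNbrK x y) (hx : x ∈ boxK k r) :
    y ∈ boxK k (r + 1) := by
  simpa using add_mem_boxK (v := y - x) hx h.abs_sub_le_one

theorem ncard_inter_boxK_le_of_add_mem {T U : Set (Fin k → ℤ)} {v : Fin k → ℤ} {m : ℕ}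
    (hv : ∀ i, |v i| ≤ m) (hTU : ∀ x ∈ T, x + v ∈ U) (r : ℕ) :
    (T ∩ boxK k r).ncard ≤ (U ∩ boxK k (r + m)).ncard :=
  Set.ncard_le_ncard_of_injOn (· + v)
    (fun x hx => ⟨hTU x hx.1, add_mem_boxK hx.2 hv⟩) (add_left_injective v).injOn
    ((finite_boxK k (r + m)).inter_of_right U)

theorem ncard_inter_boxK_add_ncard_compl_inter_boxK (T : Set (Fin k → ℤ)) (r : ℕ) :
    (T ∩ boxK k r).ncard + (Tᶜ ∩ boxK k r).ncard = (boxK k r).ncard := by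
  rw [← Set.sdiff_eq_compl_inter, Set.inter_comm,
    Set.ncard_inter_add_ncard_sdiff_eq_ncard _ _ (finite_boxK k r)]

theorem ncard_inter_boxK_mono (T : Set (Fin k → ℤ)) {r s : ℕ} (hrs : r ≤ s) :
    (T ∩ boxK k r).ncard ≤ (T ∩ boxK k s).ncard :=
  Set.ncard_le_ncard (Set.inter_subset_inter_right T (boxK_mono k hrs))
    ((finite_boxK k s).inter_of_right T)

theorem ncard_boxK_real {k r : ℕ} (hr : 1 ≤ r) : ((boxK k r).ncard : ℝ) = (2 * r - 1) ^ k := by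
  rw [ncard_boxK, Nat.cast_pow, Nat.cast_sub (by omega)]
  push_cast
  ring

theorem tendsto_ncard_boxK_div (k a b : ℕ) :
    Tendsto (fun r : ℕ => ((boxK k (r + a)).ncard : ℝ) / (boxK k (r + b)).ncard) atTop (𝓝 1) := by
  have hlim : Tendsto (fun r : ℕ => (2 + (2 * a - 1) / (r : ℝ)) / (2 + (2 * b - 1) / (r : ℝ)))
      atTop (𝓝 1) := by
    have := ((tendsto_const_div_atTop_nhds_zero_nat (2 * a - 1 : ℝ)).const_add 2).div
      ((tendsto_const_div_atTop_nhds_zero_nat (2 * b - 1 : ℝ)).const_add 2) (by norm_num)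
    rwa [add_zero, div_self two_ne_zero] at this
  refine (by simpa using hlim.pow k : Tendsto _ _ _).congr' ?_
  filter_upwards [eventually_ge_atTop 1] with r hr
  rw [ncard_boxK_real (by omega), ncard_boxK_real (by omega), ← div_pow]
  congr 1
  field_simp
  push_cast
  ring

theorem upperDensityK_eq (S : Set (Fin k → ℤ)) :
    upperDensityK S =
      limsup (fun r : ℕ => ((S ∩ boxK k r).ncard : ℝ) / (boxK k r).ncard) atTop :=
  limsup_congr <| (eventually_ge_atTop 1).mono fun r hr => by rw [ncard_boxK_real hr]

theorem hasDensityK_iff (S : Set (Fin k → ℤ)) (d : ℝ) :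
    HasDensityK S d ↔
      Tendsto (fun r : ℕ => ((S ∩ boxK k r).ncard : ℝ) / (boxK k r).ncard) atTop (𝓝 d) :=
  tendsto_congr' <| (eventually_ge_atTop 1).mono fun r hr => by dsimp only; rw [ncard_boxK_real hr]

theorem upperDensityK_le_of_ncard_le {S : Set (Fin k → ℤ)} {C : ℝ} (m : ℕ)
    (h : ∀ r, ((S ∩ boxK k r).ncard : ℝ) ≤ C * (boxK k (r + m)).ncard) :
    upperDensityK S ≤ C := by
  have hbound : Tendsto (fun r : ℕ => C * (((boxK k (r + m)).ncard : ℝ) / (boxK k r).ncard))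
      atTop (𝓝 C) := by
    simpa using (tendsto_ncard_boxK_div k m 0).const_mul C
  rw [upperDensityK_eq, ← hbound.limsup_eq]
  refine limsup_le_limsup (Eventually.of_forall fun r => ?_)
    (isCoboundedUnder_le_of_le atTop fun r => by positivity) hbound.isBoundedUnder_le
  dsimp only
  rw [mul_div_assoc']
  exact div_le_div_of_nonneg_right (h r) (Nat.cast_nonneg _)

theorem hasDensityK_half_of_le {S : Set (Fin k → ℤ)}
    (hup : ∀ r, 2 * (S ∩ boxK k r).ncard ≤ (boxK k (r + 1)).ncard)
    (hlow : ∀ r, (boxK k r).ncard ≤ 2 * (S ∩ boxK k (r + 1)).ncard) :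
    HasDensityK S (1 / 2) := by
  rw [hasDensityK_iff, ← tendsto_add_atTop_iff_nat 1]
  have hlim : ∀ a, Tendsto (fun r : ℕ =>
      ((boxK k (r + a)).ncard : ℝ) / 2 / (boxK k (r + 1)).ncard) atTop (𝓝 (1 / 2)) := fun a => by
    simpa only [div_right_comm _ (2 : ℝ)] using (tendsto_ncard_boxK_div k a 1).div_const 2
  refine tendsto_of_tendsto_of_tendsto_of_le_of_le (hlim 0) (hlim 2) (fun r => ?_) (fun r => ?_)
  all_goals
    dsimp only
    refine div_le_div_of_nonneg_right ?_ (Nat.cast_nonneg _)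
  · rw [add_zero, div_le_iff₀ two_pos, mul_comm]
    exact_mod_cast hlow r
  · rw [le_div_iff₀ two_pos, mul_comm]
    exact_mod_cast hup (r + 1)

theorem mul_ncard_inter_boxK_le {n : ℕ} {S : Set (Fin k → ℤ)} (hn : n ≤ 2 * k)
    (hS : ∀ x ∈ S, nbrCountK S x ≤ n) (r : ℕ) :
    (4 * k - n) * (S ∩ boxK k r).ncard ≤ 2 * k * (boxK k (r + 1)).ncard := by
  classical
  rw [ncard_inter_boxK, ← coe_boxFinset, Set.ncard_coe_finset]
  set A := {x ∈ boxFinset k r | x ∈ S}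
  set B := boxFinset k (r + 1)
  set T := {y ∈ B | y ∉ S}
  have hnbr_mem : ∀ x ∈ A, ∀ y, IsNbrK x y → y ∈ B := fun x hx y hxy =>
    mem_boxFinset.2 (hxy.mem_boxK_succ (mem_boxFinset.1 (mem_filter.1 hx).1))
  have hedges : #A * (2 * k - n) ≤ #T * (2 * k) := by
    refine card_mul_le_card_mul IsNbrK (fun x hx => ?_) (fun y _ => ?_)
    · have hsplit := card_filter_add_card_filter_not (s := nbrFinset x) (· ∈ S)
      rw [card_nbrFinset, ← nbrCountK_eq_card] at hsplit
      have := hS x (mem_filter.1 hx).2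
      calc 2 * k - n ≤ #{y ∈ nbrFinset x | y ∉ S} := by omega
        _ ≤ #(T.bipartiteAbove IsNbrK x) := card_le_card fun y hy => by
          simp only [mem_filter, mem_nbrFinset] at hy
          exact mem_filter.2 ⟨mem_filter.2 ⟨hnbr_mem x hx y hy.1, hy.2⟩, hy.1⟩
    · calc #(A.bipartiteBelow IsNbrK y) ≤ #(nbrFinset y) := card_le_card fun x hx =>
            mem_nbrFinset.2 (mem_filter.1 hx).2.symm
        _ = 2 * k := card_nbrFinset y
  have hAT : #A + #T ≤ #B := by
    rw [← card_filter_add_card_filter_not (s := B) (· ∈ S)]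
    refine Nat.add_le_add_right (card_le_card fun x hx => ?_) _
    obtain ⟨hxr, hxS⟩ := mem_filter.1 hx
    exact mem_filter.2 ⟨mem_boxFinset.2 (boxK_mono k r.le_succ (mem_boxFinset.1 hxr)), hxS⟩
  calc (4 * k - n) * #A = #A * (2 * k - n) + 2 * k * #A := by
        rw [show 4 * k - n = 2 * k - n + 2 * k by omega]; ring
    _ ≤ #T * (2 * k) + 2 * k * #A := by gcongr
    _ = 2 * k * (#A + #T) := by ring
    _ ≤ 2 * k * #B := by gcongr

theorem upperDensityK_le_of_nbrCountK_le (hk : 1 ≤ k) {n : ℕ} (hn : n ≤ 2 * k)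
    {S : Set (Fin k → ℤ)} (hS : ∀ x ∈ S, nbrCountK S x ≤ n) :
    upperDensityK S ≤ 2 * (k : ℝ) / (4 * k - n) := by
  have hn' : (n : ℝ) ≤ 2 * k := by exact_mod_cast hn
  have hk' : (1 : ℝ) ≤ k := by exact_mod_cast hk
  refine upperDensityK_le_of_ncard_le 1 fun r => ?_
  rw [div_mul_eq_mul_div, le_div_iff₀ (by linarith)]
  have := mul_ncard_inter_boxK_le hn hS r
  rw [← Nat.cast_le (α := ℝ), Nat.cast_mul, Nat.cast_sub (by omega)] at this
  push_cast at this
  linarith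

def unitSquare (i j : Fin k) : Fin 4 → Fin k → ℤ :=
  ![0, Pi.single i 1, Pi.single i 1 + Pi.single j 1, Pi.single j 1]

theorem abs_unitSquare_le_one {i j : Fin k} (hij : i ≠ j) (c : Fin 4) (l : Fin k) :
    |unitSquare i j c l| ≤ 1 := by
  fin_cases c <;> simp [unitSquare, Pi.single_apply] <;> split_ifs <;> simp_all

theorem sum_unitSquare_mem_le_two {S : Set (Fin k → ℤ)} [DecidablePred (· ∈ S)]
    (hS : ∀ x ∈ S, nbrCountK S x ≤ 1) {i j : Fin k} (hij : i ≠ j) (x : Fin k → ℤ) :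
    ∑ c, (if x + unitSquare i j c ∈ S then 1 else 0) ≤ 2 := by
  have no_path : ∀ {y z w}, IsNbrK y z → IsNbrK y w → z ≠ w → ¬(y ∈ S ∧ z ∈ S ∧ w ∈ S) :=
    fun hyz hyw hzw ⟨hy, hz, hw⟩ => hzw (eq_of_isNbrK_of_nbrCountK_le_one hS hy hz hw hyz hyw)
  have hne_ij : x + Pi.single i 1 ≠ x + Pi.single j 1 := fun h => by
    simpa [hij] using congrFun h i
  have hne_diag : x ≠ x + Pi.single i 1 + Pi.single j 1 := fun h => by
    simpa [hij] using congrFun h i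
  have h0 := no_path (isNbrK_add_single x i) (isNbrK_add_single x j) hne_ij
  have h1 := no_path (isNbrK_add_single x i).symm (isNbrK_add_single (x + Pi.single i 1) j)
    hne_diag
  have h2 := no_path (isNbrK_add_single (x + Pi.single i 1) j).symm
    (add_right_comm x (Pi.single j 1) (Pi.single i 1 : Fin k → ℤ) ▸
      (isNbrK_add_single (x + Pi.single j 1) i).symm) hne_ij
  have h3 := no_path (isNbrK_add_single x j).symm
    (add_right_comm x (Pi.single j 1) (Pi.single i 1 : Fin k → ℤ) ▸
      isNbrK_add_single (x + Pi.single j 1) i) hne_diag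
  simp only [Fin.sum_univ_four, unitSquare, Matrix.cons_val, add_zero, ← add_assoc]
  by_cases x ∈ S <;> by_cases x + Pi.single i 1 ∈ S <;>
    by_cases x + Pi.single i 1 + Pi.single j 1 ∈ S <;> by_cases x + Pi.single j 1 ∈ S <;> simp_all

theorem two_mul_ncard_inter_boxK_le {S : Set (Fin k → ℤ)} (hS : ∀ x ∈ S, nbrCountK S x ≤ 1)
    {i j : Fin k} (hij : i ≠ j) (r : ℕ) :
    2 * (S ∩ boxK k r).ncard ≤ (boxK k (r + 1)).ncard := by
  classical
  have hshift : ∀ c, (S ∩ boxK k r).ncard ≤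
      ({x | x + unitSquare i j c ∈ S} ∩ boxK k (r + 1)).ncard := fun c =>
    ncard_inter_boxK_le_of_add_mem (v := -unitSquare i j c)
      (fun l => by simpa using abs_unitSquare_le_one hij c l) (fun x hx => by simpa using hx) r
  have : 4 * (S ∩ boxK k r).ncard ≤ 2 * (boxK k (r + 1)).ncard := calc
    4 * (S ∩ boxK k r).ncard = ∑ _c : Fin 4, (S ∩ boxK k r).ncard := by simp
    _ ≤ ∑ c, ({x | x + unitSquare i j c ∈ S} ∩ boxK k (r + 1)).ncard :=
        sum_le_sum fun c _ => hshift c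
    _ = ∑ x ∈ boxFinset k (r + 1), ∑ c, if x + unitSquare i j c ∈ S then 1 else 0 := by
        simp_rw [ncard_inter_boxK, card_filter, Set.mem_ofPred_eq]
        exact sum_comm
    _ ≤ ∑ _x ∈ boxFinset k (r + 1), 2 :=
        sum_le_sum fun x _ => sum_unitSquare_mem_le_two hS hij x
    _ = 2 * (boxK k (r + 1)).ncard := by
        rw [sum_const, smul_eq_mul, mul_comm, ← coe_boxFinset, Set.ncard_coe_finset]
  omega

theorem upperDensityK_le_half_of_nbrCountK_le_one (hk : 2 ≤ k) {S : Set (Fin k → ℤ)}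
    (hS : ∀ x ∈ S, nbrCountK S x ≤ 1) : upperDensityK S ≤ 1 / 2 := by
  have hij : (⟨0, by omega⟩ : Fin k) ≠ ⟨1, by omega⟩ := by simp
  refine upperDensityK_le_of_ncard_le 1 fun r => ?_
  have := (Nat.cast_le (α := ℝ)).2 (two_mul_ncard_inter_boxK_le hS hij r)
  push_cast at this
  linarith

theorem sum_add_single (x : Fin k → ℤ) (i : Fin k) (a : ℤ) :
    ∑ l, (x + Pi.single i a : Fin k → ℤ) l = ∑ l, x l + a := by
  simp [sum_add_distrib]

theorem add_single_mem_checkerK_iff {x : Fin k → ℤ} {i : Fin k} :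
    x + Pi.single i 1 ∈ checkerK k ↔ x ∉ checkerK k := by
  simp only [checkerK, Set.mem_ofPred_eq, sum_add_single]
  omega

theorem not_isNbrK_of_mem_checkerK : ∀ x ∈ checkerK k, ∀ y ∈ checkerK k, ¬IsNbrK x y := by
  rintro x hx y hy hxy
  obtain ⟨i, u, rfl⟩ := isNbrK_iff.1 hxy
  simp only [checkerK, Set.mem_ofPred_eq, sum_add_single] at hx hy
  rcases Int.units_eq_one_or u with rfl | rfl <;> simp at hy <;> omega

theorem hasDensityK_checkerK (hk : k ≠ 0) : HasDensityK (checkerK k) (1 / 2) := by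
  set e : Fin k → ℤ := Pi.single ⟨0, Nat.pos_of_ne_zero hk⟩ 1
  have he : ∀ l, |e l| ≤ ((1 : ℕ) : ℤ) := fun l => by
    simp only [e, Pi.single_apply]
    split_ifs <;> simp
  have hout := ncard_inter_boxK_le_of_add_mem (U := (checkerK k)ᶜ) he
    fun x hx => add_single_mem_checkerK_iff.not_left.2 hx
  have hin := ncard_inter_boxK_le_of_add_mem (T := (checkerK k)ᶜ) (U := checkerK k) he
    fun x hx => add_single_mem_checkerK_iff.2 hx
  have hmono := fun r : ℕ => ncard_inter_boxK_mono (checkerK k) (r.le_add_right 1)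
  have hsplit := ncard_inter_boxK_add_ncard_compl_inter_boxK (checkerK k)
  refine hasDensityK_half_of_le (fun r => ?_) (fun r => ?_)
  · linarith [hout r, hmono r, hsplit (r + 1)]
  · linarith [hin r, hmono r, hsplit r]

theorem Delta_k_bounds :
    (∀ k : ℕ, 1 ≤ k → ∀ n : ℕ, n ≤ 2 * k → ∀ S : Set (Fin k → ℤ),
      (∀ x ∈ S, nbrCountK S x ≤ n) →
      upperDensityK S ≤ (2 * (k : ℝ)) / (4 * (k : ℝ) - (n : ℝ))) ∧
    (∀ k : ℕ, 2 ≤ k →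
      (∀ S : Set (Fin k → ℤ), (∀ x ∈ S, nbrCountK S x ≤ 1) → upperDensityK S ≤ 1 / 2) ∧
      (∀ x ∈ checkerK k, ∀ y ∈ checkerK k, ¬ IsNbrK x y) ∧
      HasDensityK (checkerK k) (1 / 2)) :=
  ⟨fun _ hk _ hn _ hS => upperDensityK_le_of_nbrCountK_le hk hn hS,
    fun _ hk => ⟨fun _ hS => upperDensityK_le_half_of_nbrCountK_le_one hk hS,
      not_isNbrK_of_mem_checkerK, hasDensityK_checkerK (by omega)⟩⟩
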